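/- Let ρ₀ > 0 and internal energy e₀ = E₀ − |m₀|²/(2ρ₀) > 0 a.e. on a cell K, and suppose the entropy s₀ = (1/(γ−1)) log((γ−1) ρ₀^{−γ} (E₀ − |m₀|²/(2ρ₀)) · ρ₀^{γ−1}) satisfies s₀ ≥ s̲ a.e. on K for some constant s̲. Then the entropy evaluated at the cell averages also satisfies s(⟨ρ₀⟩_K, ⟨m₀⟩_K, ⟨E₀⟩_K) ≥ s̲, where ⟨·⟩_K denotes the mean over K. -/

import Mathlib

open MeasureTheory Set

/-!
With `c = exp((γ-1) s̲)`, the bound `s̲ ≤ s(ρ,m,E)` is the inequality `c ρ^γ ≤ (γ-1) e` between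
the convex function `ρ^γ` and (a multiple of) the internal energy `e = E - |m|²/(2ρ)`, which is
concave in `(ρ,m,E)`. Averaging this inequality over `K` and applying Jensen's inequality to both
sides gives the same inequality for the cell averages. Concavity of `e` amounts to convexity of
the kinetic energy `|m|²/(2ρ)`, which is the supremum over `b` of the affine functions
`⟨b,m⟩ - ρ|b|²/2`, the supremum being attained at `b = m/ρ`.
-/

/-- The physical entropy `s(ρ,m,E) = (1/(γ−1)) log((γ−1)(E − |m|²/(2ρ))/ρ^γ)`. -/
noncomputable def entropy {d : ℕ} (γ : ℝ) (ρ : ℝ) (m : EuclideanSpace ℝ (Fin d)) (E : ℝ) : ℝ :=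
  (1 / (γ - 1)) * Real.log ((γ - 1) * (E - ‖m‖ ^ 2 / (2 * ρ)) / ρ ^ γ)

theorem le_entropy_iff {d : ℕ} {γ ρ E s : ℝ} {m : EuclideanSpace ℝ (Fin d)} (hγ : 1 < γ)
    (hρ : 0 < ρ) (he : 0 < E - ‖m‖ ^ 2 / (2 * ρ)) :
    s ≤ entropy γ ρ m E ↔
      Real.exp ((γ - 1) * s) * ρ ^ γ ≤ (γ - 1) * (E - ‖m‖ ^ 2 / (2 * ρ)) := by
  have hγ₁ : 0 < γ - 1 := sub_pos.2 hγ
  have hργ : 0 < ρ ^ γ := Real.rpow_pos_of_pos hρ γ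
  rw [entropy, one_div, ← div_eq_inv_mul, le_div_iff₀' hγ₁,
    Real.le_log_iff_exp_le (by positivity), le_div_iff₀ hργ]

section KineticEnergy

variable {F : Type*} [NormedAddCommGroup F] [InnerProductSpace ℝ F]

theorem inner_sub_le_sq_norm_div {ρ : ℝ} (hρ : 0 < ρ) (b m : F) :
    inner ℝ b m - ρ * (‖b‖ ^ 2 / 2) ≤ ‖m‖ ^ 2 / (2 * ρ) := by
  have hsq : 0 ≤ ‖m - ρ • b‖ ^ 2 := sq_nonneg _
  rw [norm_sub_sq_real, real_inner_smul_right, norm_smul, Real.norm_eq_abs,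
    abs_of_pos hρ] at hsq
  rw [le_div_iff₀ (by positivity)]
  nlinarith [real_inner_comm b m]

theorem inner_inv_smul_sub_eq_sq_norm_div (ρ : ℝ) (m : F) :
    inner ℝ (ρ⁻¹ • m) m - ρ * (‖ρ⁻¹ • m‖ ^ 2 / 2) = ‖m‖ ^ 2 / (2 * ρ) := by
  rw [real_inner_smul_left, real_inner_self_eq_norm_sq, norm_smul, Real.norm_eq_abs,
    mul_pow, sq_abs]
  rcases eq_or_ne ρ 0 with rfl | hρ
  · simp
  · field_simp
    ring

variable [CompleteSpace F] {Ω : Type*} [MeasurableSpace Ω] {μ : Measure Ω}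

theorem sq_norm_integral_div_le_integral {ρ : Ω → ℝ} {m : Ω → F}
    (hρ : ∀ᵐ x ∂μ, 0 < ρ x) (hρi : Integrable ρ μ) (hmi : Integrable m μ)
    (hkin : Integrable (fun x => ‖m x‖ ^ 2 / (2 * ρ x)) μ) :
    ‖∫ x, m x ∂μ‖ ^ 2 / (2 * ∫ x, ρ x ∂μ) ≤ ∫ x, ‖m x‖ ^ 2 / (2 * ρ x) ∂μ := by
  set b := (∫ x, ρ x ∂μ)⁻¹ • ∫ x, m x ∂μ
  calc ‖∫ x, m x ∂μ‖ ^ 2 / (2 * ∫ x, ρ x ∂μ)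
      = inner ℝ b (∫ x, m x ∂μ) - (∫ x, ρ x ∂μ) * (‖b‖ ^ 2 / 2) :=
        (inner_inv_smul_sub_eq_sq_norm_div _ _).symm
    _ = ∫ x, (inner ℝ b (m x) - ρ x * (‖b‖ ^ 2 / 2)) ∂μ := by
        rw [integral_sub (hmi.const_inner b) (hρi.mul_const _), integral_inner hmi,
          integral_mul_const]
    _ ≤ ∫ x, ‖m x‖ ^ 2 / (2 * ρ x) ∂μ :=
        integral_mono_ae ((hmi.const_inner b).sub (hρi.mul_const _)) hkin
          (hρ.mono fun x hx => inner_sub_le_sq_norm_div hx b (m x))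

end KineticEnergy

theorem integral_pos_of_ae_pos {Ω : Type*} [MeasurableSpace Ω] {μ : Measure Ω}
    [IsProbabilityMeasure μ] {f : Ω → ℝ} (hf : Integrable f μ) (hpos : ∀ᵐ x ∂μ, 0 < f x) :
    0 < ∫ x, f x ∂μ := by
  obtain ⟨x, hx, hle⟩ := exists_notMem_null_le_integral hf (ae_iff.1 hpos)
  exact (not_not.1 hx).trans_le hle

theorem le_entropy_integral {d : ℕ} {Ω : Type*} [MeasurableSpace Ω] {μ : Measure Ω}
    [IsProbabilityMeasure μ] {γ s : ℝ} (hγ : 1 < γ) {ρ E : Ω → ℝ}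
    {m : Ω → EuclideanSpace ℝ (Fin d)} (hρi : Integrable ρ μ) (hmi : Integrable m μ)
    (hEi : Integrable E μ) (hργi : Integrable (fun x => ρ x ^ γ) μ)
    (hkin : Integrable (fun x => ‖m x‖ ^ 2 / (2 * ρ x)) μ) (hρ : ∀ᵐ x ∂μ, 0 < ρ x)
    (he : ∀ᵐ x ∂μ, 0 < E x - ‖m x‖ ^ 2 / (2 * ρ x))
    (hs : ∀ᵐ x ∂μ, s ≤ entropy γ (ρ x) (m x) (E x)) :
    s ≤ entropy γ (∫ x, ρ x ∂μ) (∫ x, m x ∂μ) (∫ x, E x ∂μ) := by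
  set c := Real.exp ((γ - 1) * s)
  have hγ₁ : 0 < γ - 1 := sub_pos.2 hγ
  have hρ_avg : 0 < ∫ x, ρ x ∂μ := integral_pos_of_ae_pos hρi hρ
  have hjensen : (∫ x, ρ x ∂μ) ^ γ ≤ ∫ x, ρ x ^ γ ∂μ :=
    (convexOn_rpow hγ.le).map_integral_le
      (Real.continuous_rpow_const (by positivity)).continuousOn isClosed_Ici
      (hρ.mono fun x hx => hx.le) hρi hργi
  have hpointwise : ∀ᵐ x ∂μ, c * ρ x ^ γ ≤ (γ - 1) * (E x - ‖m x‖ ^ 2 / (2 * ρ x)) := by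
    filter_upwards [hρ, he, hs] with x hρx hex hsx
    exact (le_entropy_iff hγ hρx hex).1 hsx
  have hkey : c * (∫ x, ρ x ∂μ) ^ γ
      ≤ (γ - 1) * ((∫ x, E x ∂μ) - ‖∫ x, m x ∂μ‖ ^ 2 / (2 * ∫ x, ρ x ∂μ)) :=
    calc c * (∫ x, ρ x ∂μ) ^ γ ≤ ∫ x, c * ρ x ^ γ ∂μ := by
          rw [integral_const_mul]
          exact mul_le_mul_of_nonneg_left hjensen (Real.exp_pos _).le
      _ ≤ ∫ x, (γ - 1) * (E x - ‖m x‖ ^ 2 / (2 * ρ x)) ∂μ :=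
          integral_mono_ae (hργi.const_mul c) ((hEi.sub hkin).const_mul _) hpointwise
      _ = (γ - 1) * ((∫ x, E x ∂μ) - ∫ x, ‖m x‖ ^ 2 / (2 * ρ x) ∂μ) := by
          rw [integral_const_mul, integral_sub hEi hkin]
      _ ≤ _ := by
          gcongr
          exact sq_norm_integral_div_le_integral hρ hρi hmi hkin
  have he_avg : 0 < (∫ x, E x ∂μ) - ‖∫ x, m x ∂μ‖ ^ 2 / (2 * ∫ x, ρ x ∂μ) :=
    pos_of_mul_pos_right ((by positivity : 0 < c * (∫ x, ρ x ∂μ) ^ γ).trans_le hkey) hγ₁.le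
  exact (le_entropy_iff hγ hρ_avg he_avg).2 hkey

theorem stmt9_general {d : ℕ} (γ : ℝ) (hγ : 1 < γ) (sLow : ℝ)
    (K : Set (EuclideanSpace ℝ (Fin d)))
    (hKpos : 0 < volume K) (hKfin : volume K < ⊤)
    (ρ₀ E₀ : EuclideanSpace ℝ (Fin d) → ℝ)
    (m₀ : EuclideanSpace ℝ (Fin d) → EuclideanSpace ℝ (Fin d))
    (hρint : IntegrableOn ρ₀ K) (hmint : IntegrableOn m₀ K) (hEint : IntegrableOn E₀ K)
    (hργint : IntegrableOn (fun x => ρ₀ x ^ γ) K)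
    (hkin : IntegrableOn (fun x => ‖m₀ x‖ ^ 2 / (2 * ρ₀ x)) K)
    (hρpos : ∀ᵐ x ∂volume.restrict K, 0 < ρ₀ x)
    (hepos : ∀ᵐ x ∂volume.restrict K, 0 < E₀ x - ‖m₀ x‖ ^ 2 / (2 * ρ₀ x))
    (hent : ∀ᵐ x ∂volume.restrict K, sLow ≤ entropy γ (ρ₀ x) (m₀ x) (E₀ x)) :
    sLow ≤ entropy γ (⨍ x in K, ρ₀ x ∂volume) (⨍ x in K, m₀ x ∂volume)
      (⨍ x in K, E₀ x ∂volume) := by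
  set μ := volume.restrict K
  have hμ : μ univ ≠ 0 := by rw [Measure.restrict_apply_univ]; exact hKpos.ne'
  have : IsFiniteMeasure μ := ⟨by rwa [Measure.restrict_apply_univ]⟩
  have : NeZero μ := ⟨fun h => hμ (by rw [h, Measure.coe_zero, Pi.zero_apply])⟩
  have hc : (μ univ)⁻¹ ≠ ⊤ := ENNReal.inv_ne_top.2 hμ
  simp only [average_eq']
  exact le_entropy_integral hγ (hρint.smul_measure hc) (hmint.smul_measure hc)
    (hEint.smul_measure hc) (hργint.smul_measure hc) (hkin.smul_measure hc)
    (Measure.ae_smul_measure hρpos _) (Measure.ae_smul_measure hepos _) (Measure.ae_smul_measure hent _)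

/-- The minimal entropy principle survives cell averaging: if `s(ρ₀,m₀,E₀) ≥ sLow` a.e. on a
cell `K`, then the entropy of the cell averages is also `≥ sLow`. -/
theorem stmt9 {d : ℕ} (γ : ℝ) (hγ : 1 < γ) (sLow : ℝ)
    (K : Set (EuclideanSpace ℝ (Fin d)))
    (hKmeas : MeasurableSet K) (hKpos : 0 < volume K) (hKfin : volume K < ⊤)
    (ρ₀ E₀ : EuclideanSpace ℝ (Fin d) → ℝ)
    (m₀ : EuclideanSpace ℝ (Fin d) → EuclideanSpace ℝ (Fin d))
    (hρint : IntegrableOn ρ₀ K) (hmint : IntegrableOn m₀ K) (hEint : IntegrableOn E₀ K)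
    (hργint : IntegrableOn (fun x => ρ₀ x ^ γ) K)
    (hkin : IntegrableOn (fun x => ‖m₀ x‖ ^ 2 / (2 * ρ₀ x)) K)
    (hρpos : ∀ᵐ x ∂volume.restrict K, 0 < ρ₀ x)
    (hepos : ∀ᵐ x ∂volume.restrict K, 0 < E₀ x - ‖m₀ x‖ ^ 2 / (2 * ρ₀ x))
    (hent : ∀ᵐ x ∂volume.restrict K, sLow ≤ entropy γ (ρ₀ x) (m₀ x) (E₀ x)) :
    sLow ≤ entropy γ (⨍ x in K, ρ₀ x ∂volume) (⨍ x in K, m₀ x ∂volume)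
      (⨍ x in K, E₀ x ∂volume) :=
  stmt9_general γ hγ sLow K hKpos hKfin ρ₀ E₀ m₀ hρint hmint hEint hργint hkin hρpos hepos hent
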